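/- arXiv:1010.1446 — 5 statements merged into one kernel-verified Lean document; each statement's English description precedes it below -/
import Mathlib

section
/- Let n d : ℕ, let v : Fin n → Fin d → ℝ be the apexes of an arrangement of n tropical hyperplanes in ℝ^d, and for x : Fin d → ℝ let type v x : Fin n → Finset (Fin d) be given by (type v x) i = {j | ∀ k, x k - v i k ≤ x j - v i j}. Fix i₀ i : Fin n and j k : Fin d with j ∈ (type v (v i₀)) i and k ∈ (type v (v i₀)) i. Then for every point y : Fin d → ℝ with (type v y) i₀ = Finset.univ, one has j ∈ (type v y) i ↔ k ∈ (type v y) i: any point lying on the apex face of hyperplane i₀ necessarily satisfies the same tie between directions j and k with respect to hyperplane i. -/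
/-- The type of a point `x` with respect to the tropical hyperplane arrangement with
apexes `v : Fin n → Fin d → ℝ`: at position `i` it is the set of indices `j` at which
the maximum of `k ↦ x k - v i k` is attained. -/
noncomputable def tropType {n d : ℕ} (v : Fin n → Fin d → ℝ) (x : Fin d → ℝ) : Fin n → Finset (Fin d) :=
  fun i => Finset.univ.filter (fun j => ∀ k, x k - v i k ≤ x j - v i j)

/-- Any point lying on the apex face of hyperplane `i₀` necessarily satisfies the same
tie between directions `j` and `k` with respect to hyperplane `i` as the apex `v i₀`. -/
theorem apexFace_tie_propagates (n d : ℕ) (v : Fin n → Fin d → ℝ) (i₀ i : Fin n)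
    (j k : Fin d) (hj : j ∈ tropType v (v i₀) i) (hk : k ∈ tropType v (v i₀) i) :
    ∀ y : Fin d → ℝ, tropType v y i₀ = (Finset.univ : Finset (Fin d)) →
      (j ∈ tropType v y i ↔ k ∈ tropType v y i) := by
  intro y hy
  simp only [tropType, Finset.mem_filter, Finset.mem_univ, true_and] at hj hk ⊢
  have hy' : ∀ a b : Fin d, y b - v i₀ b ≤ y a - v i₀ a := by
    intro a b
    have ha : a ∈ tropType v y i₀ := hy ▸ Finset.mem_univ a
    simp only [tropType, Finset.mem_filter, Finset.mem_univ, true_and] at ha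
    exact ha b
  have hyjk : y j - v i₀ j = y k - v i₀ k := le_antisymm (hy' k j) (hy' j k)
  have hvjk : v i₀ j - v i j = v i₀ k - v i k := le_antisymm (hk j) (hj k)
  have key : y j - v i j = y k - v i k := by linarith
  constructor
  · intro h m; calc y m - v i m ≤ y j - v i j := h m
      _ = y k - v i k := key
  · intro h m; calc y m - v i m ≤ y k - v i k := h m
      _ = y j - v i j := key.symm
end

section
/- Let n d : ℕ, let v : Fin n → Fin d → ℝ be the apexes of an arrangement of n tropical hyperplanes in ℝ^d, and for x : Fin d → ℝ let type v x : Fin n → Finset (Fin d) be given by (type v x) i = {j | ∀ k, x k - v i k ≤ x j - v i j}. Fix i₀ i : Fin n with i ≠ i₀ and j k : Fin d with j ≠ k, and suppose j ∈ (type v (v i₀)) i and k ∈ (type v (v i₀)) i (the apex A = type v (v i₀) is non-generic at hyperplane i). Then there is no point y : Fin d → ℝ whose type agrees with A at every position other than i and has i-th coordinate {k}: ¬ ∃ y, (∀ l, l ≠ i → (type v y) l = (type v (v i₀)) l) ∧ (type v y) i = {k}. In particular the collection of types of a non-generic tropical hyperplane arrangement fails the surrounding property required of a tropical oriented matroid.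 -/
/-- The types of a non-generic tropical hyperplane arrangement fail the surrounding
property: if the apex `v i₀` is non-generic at hyperplane `i` (its type there contains
two distinct elements `j, k`), then no point has a type agreeing with the apex's type at
every position other than `i` and equal to `{k}` at position `i`. -/
theorem nonGeneric_fails_surrounding (n d : ℕ) (v : Fin n → Fin d → ℝ) (i₀ i : Fin n)
    (hii : i ≠ i₀) (j k : Fin d) (hjk : j ≠ k)
    (hj : j ∈ tropType v (v i₀) i) (hk : k ∈ tropType v (v i₀) i) :
    ¬ ∃ y : Fin d → ℝ,
        (∀ l : Fin n, l ≠ i → tropType v y l = tropType v (v i₀) l) ∧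
        tropType v y i = {k} := by
  rintro ⟨y, hagree, hyi⟩
  have hA : tropType v (v i₀) i₀ = Finset.univ := by
    ext a; simp [tropType]
  have hY : tropType v y i₀ = Finset.univ := (hagree i₀ hii.symm).trans hA
  have key : ∀ a b : Fin d, y b - v i₀ b ≤ y a - v i₀ a := by
    intro a b
    have ha : a ∈ tropType v y i₀ := hY ▸ Finset.mem_univ a
    simp only [tropType, Finset.mem_filter] at ha
    exact ha.2 b
  have hc : ∀ a b : Fin d, y a - v i₀ a = y b - v i₀ b :=
    fun a b => le_antisymm (key b a) (key a b)
  have hj' : j ∈ tropType v y i := by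
    simp only [tropType, Finset.mem_filter, Finset.mem_univ, true_and] at hj ⊢
    intro m
    have h1 := hj m
    have h2 := hc m j
    linarith
  rw [hyi] at hj'
  exact hjk (Finset.mem_singleton.mp hj')
end

section
/- Let n d : ℕ with 1 ≤ d, and let v : Fin n → Fin d → ℝ be the apexes of an arrangement of n tropical hyperplanes in ℝ^d; for x : Fin d → ℝ let type v x : Fin n → Finset (Fin d) be given by (type v x) i = {j | ∀ k, x k - v i k ≤ x j - v i j}. Then the elimination property holds for the realized types: for all points x y : Fin d → ℝ and every position i : Fin n, there exists a point z : Fin d → ℝ such that (type v z) i = (type v x) i ∪ (type v y) i, and for every l : Fin n, (type v z) l equals (type v x) l, or (type v y) l, or (type v x) l ∪ (type v y) l. -/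
lemma mem_tropType_iff {n d : ℕ} {v : Fin n → Fin d → ℝ} {w : Fin d → ℝ} {l : Fin n}
    {j : Fin d} : j ∈ tropType v w l ↔ ∀ k, w k - v l k ≤ w j - v l j := by
  simp [tropType]

lemma tropType_nonempty {n d : ℕ} (hd : 1 ≤ d) (v : Fin n → Fin d → ℝ) (w : Fin d → ℝ)
    (l : Fin n) : ∃ a, a ∈ tropType v w l := by
  have : Nonempty (Fin d) := ⟨⟨0, hd⟩⟩
  obtain ⟨a, -, ha⟩ := Finset.exists_max_image Finset.univ (fun k => w k - v l k)
    Finset.univ_nonempty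
  exact ⟨a, mem_tropType_iff.2 fun k => ha k (Finset.mem_univ k)⟩

lemma tropType_shift {n d : ℕ} (v : Fin n → Fin d → ℝ) (w : Fin d → ℝ) (c : ℝ) (l : Fin n) :
    tropType v (fun k => w k + c) l = tropType v w l := by
  ext j
  simp only [mem_tropType_iff]
  constructor <;> intro h k <;> have := h k <;> linarith

lemma max_case_lt {n d : ℕ} (v : Fin n → Fin d → ℝ) (w y : Fin d → ℝ) (l : Fin n)
    (a b : Fin d) (ha : a ∈ tropType v w l) (hb : b ∈ tropType v y l)
    (h : y b - v l b < w a - v l a) :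
    tropType v (fun k => max (w k) (y k)) l = tropType v w l := by
  rw [mem_tropType_iff] at ha hb
  ext j
  simp only [mem_tropType_iff]
  constructor
  · intro hj
    have h1 : w a - v l a ≤ max (w j) (y j) - v l j :=
      le_trans (sub_le_sub_right (le_max_left _ _) _) (hj a)
    have h3 : max (w j) (y j) = w j := by
      rcases max_cases (w j) (y j) with ⟨he, _⟩ | ⟨he, _⟩
      · exact he
      · exfalso; rw [he] at h1; linarith [hb j]
    rw [h3] at h1
    intro k
    linarith [ha k]
  · intro hj k
    apply le_trans _ (sub_le_sub_right (le_max_left (w j) (y j)) _)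
    rcases max_cases (w k) (y k) with ⟨he, _⟩ | ⟨he, _⟩ <;> rw [he] <;>
      linarith [hj k, hj a, hb k]

lemma max_case_eq {n d : ℕ} (v : Fin n → Fin d → ℝ) (w y : Fin d → ℝ) (l : Fin n)
    (a b : Fin d) (ha : a ∈ tropType v w l) (hb : b ∈ tropType v y l)
    (h : w a - v l a = y b - v l b) :
    tropType v (fun k => max (w k) (y k)) l = tropType v w l ∪ tropType v y l := by
  rw [mem_tropType_iff] at ha hb
  ext j
  simp only [mem_tropType_iff, Finset.mem_union]
  constructor
  · intro hj
    have hm1 : w a - v l a ≤ max (w j) (y j) - v l j :=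
      le_trans (sub_le_sub_right (le_max_left _ _) _) (hj a)
    have hub' : ∀ k, y k - v l k ≤ w a - v l a := fun k => by linarith [hb k]
    have hle : max (w j) (y j) - v l j ≤ w a - v l a := by
      rcases max_cases (w j) (y j) with ⟨he, _⟩ | ⟨he, _⟩ <;> rw [he]
      · exact ha j
      · exact hub' j
    have heq : max (w j) (y j) - v l j = w a - v l a := le_antisymm hle hm1
    rcases max_cases (w j) (y j) with ⟨he, _⟩ | ⟨he, _⟩
    · left; intro k; rw [he] at heq; linarith [ha k]
    · right; intro k; rw [he] at heq; linarith [hub' k]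
  · intro hj k
    rcases hj with hj | hj
    · apply le_trans _ (sub_le_sub_right (le_max_left (w j) (y j)) _)
      rcases max_cases (w k) (y k) with ⟨he, _⟩ | ⟨he, _⟩ <;> rw [he] <;>
        linarith [hj k, hj a, hb k]
    · apply le_trans _ (sub_le_sub_right (le_max_right (w j) (y j)) _)
      rcases max_cases (w k) (y k) with ⟨he, _⟩ | ⟨he, _⟩ <;> rw [he] <;>
        linarith [hj k, hj b, ha k]

/-- Elimination property for the realized types of an arrangement: for any two points
`x, y` and any position `i`, there is a point `z` whose type at `i` is the union of the
types of `x` and `y` at `i`, and whose type at every position `l` is the type of `x`,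
the type of `y`, or their union. -/
theorem elimination_property (n d : ℕ) (hd : 1 ≤ d) (v : Fin n → Fin d → ℝ)
    (x y : Fin d → ℝ) (i : Fin n) :
    ∃ z : Fin d → ℝ,
      tropType v z i = tropType v x i ∪ tropType v y i ∧
      ∀ l : Fin n,
        tropType v z l = tropType v x l ∨
        tropType v z l = tropType v y l ∨
        tropType v z l = tropType v x l ∪ tropType v y l := by
  obtain ⟨a, ha⟩ := tropType_nonempty hd v x i
  obtain ⟨b, hb⟩ := tropType_nonempty hd v y i
  set c : ℝ := (y b - v i b) - (x a - v i a) with hc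
  set x' : Fin d → ℝ := fun k => x k + c with hx'def
  have hx' : ∀ l, tropType v x' l = tropType v x l := fun l => tropType_shift v x c l
  have ha' : a ∈ tropType v x' i := by rw [hx']; exact ha
  have hab : x' a - v i a = y b - v i b := by simp only [hx'def, hc]; ring
  refine ⟨fun k => max (x' k) (y k), ?_, ?_⟩
  · rw [max_case_eq v x' y i a b ha' hb hab, hx']
  · intro l
    obtain ⟨p, hp⟩ := tropType_nonempty hd v x' l
    obtain ⟨q, hq⟩ := tropType_nonempty hd v y l
    rcases lt_trichotomy (x' p - v l p) (y q - v l q) with h | h | h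
    · right; left
      have hcomm : (fun k => max (x' k) (y k)) = fun k => max (y k) (x' k) :=
        funext fun k => max_comm _ _
      rw [hcomm, max_case_lt v y x' l q p hq hp h]
    · right; right
      rw [max_case_eq v x' y l p q hp hq h, hx']
    · left
      rw [max_case_lt v x' y l p q hp hq h, hx']
end

section
/- Let n d : ℕ, let v : Fin n → Fin d → ℝ be the apexes of an arrangement of n tropical hyperplanes in ℝ^d, and for x : Fin d → ℝ let type v x : Fin n → Finset (Fin d) be given by (type v x) i = {j | ∀ k, x k - v i k ≤ x j - v i j}. Then for every point x : Fin d → ℝ and every direction w : Fin d → ℝ there exists ε₀ > 0 such that for all ε with 0 < ε ≤ ε₀ and every i : Fin n, (type v (x + ε • w)) i = {j ∈ (type v x) i | ∀ k ∈ (type v x) i, w k ≤ w j}. In other words, moving infinitesimally from x in direction w realizes the refinement of the type of x in which each coordinate is replaced by the set of its elements maximizing w. -/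
/-- Moving infinitesimally from `x` in direction `w` realizes the refinement of the type
of `x` in which each coordinate is replaced by the set of its elements maximizing `w`. -/
theorem refinement_by_direction (n d : ℕ) (v : Fin n → Fin d → ℝ)
    (x w : Fin d → ℝ) :
    ∃ ε₀ : ℝ, 0 < ε₀ ∧ ∀ ε : ℝ, 0 < ε → ε ≤ ε₀ → ∀ i : Fin n,
      tropType v (x + ε • w) i =
        (tropType v x i).filter (fun j => ∀ k ∈ tropType v x i, w k ≤ w j) := by
  classical
  set T : Finset (Fin n × Fin d × Fin d) :=
    Finset.univ.filter (fun p =>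
      x p.2.1 - v p.1 p.2.1 < x p.2.2 - v p.1 p.2.2 ∧ w p.2.2 < w p.2.1) with hT
  set S : Finset ℝ :=
    insert (1 : ℝ) (T.image fun p =>
      ((x p.2.2 - v p.1 p.2.2) - (x p.2.1 - v p.1 p.2.1)) / (w p.2.1 - w p.2.2)) with hS
  have hSne : S.Nonempty := ⟨1, Finset.mem_insert_self _ _⟩
  set m : ℝ := S.min' hSne with hm
  have hmpos : 0 < m := by
    apply (Finset.lt_min'_iff S hSne).mpr
    intro y hy
    rcases Finset.mem_insert.mp hy with rfl | hy
    · norm_num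
    · rcases Finset.mem_image.mp hy with ⟨p, hp, rfl⟩
      rcases Finset.mem_filter.mp hp with ⟨-, h1, h2⟩
      exact div_pos (by linarith) (by linarith)
  refine ⟨m / 2, by linarith, ?_⟩
  intro ε hε hε' i
  -- key: strict inequalities are preserved
  have key : ∀ j k : Fin d, x j - v i j < x k - v i k →
      x j + ε * w j - v i j < x k + ε * w k - v i k := by
    intro j k hjk
    by_cases hw : w j ≤ w k
    · nlinarith
    · push_neg at hw
      have hmem : (i, j, k) ∈ T := by
        rw [hT]
        exact Finset.mem_filter.mpr ⟨Finset.mem_univ _, hjk, hw⟩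
      have hmemS : ((x k - v i k) - (x j - v i j)) / (w j - w k) ∈ S := by
        rw [hS]
        exact Finset.mem_insert_of_mem (Finset.mem_image.mpr ⟨(i, j, k), hmem, rfl⟩)
      have hle : m ≤ ((x k - v i k) - (x j - v i j)) / (w j - w k) :=
        Finset.min'_le S _ hmemS
      have hεlt : ε < ((x k - v i k) - (x j - v i j)) / (w j - w k) := by linarith
      have := (lt_div_iff₀ (by linarith : (0:ℝ) < w j - w k)).mp hεlt
      nlinarith
  ext j
  simp only [tropType, Finset.mem_filter, Finset.mem_univ, true_and, Pi.add_apply,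
    Pi.smul_apply, smul_eq_mul]
  constructor
  · intro h
    have h1 : ∀ k, x k - v i k ≤ x j - v i j := by
      intro k
      by_contra hc
      push_neg at hc
      have := key j k hc
      have := h k
      linarith
    refine ⟨h1, fun k hk => ?_⟩
    have hkj : x j - v i j ≤ x k - v i k := hk j
    have hjk : x k - v i k ≤ x j - v i j := h1 k
    have hb := h k
    nlinarith
  · rintro ⟨h1, h2⟩ k
    rcases lt_or_eq_of_le (h1 k) with hlt | heq
    · exact le_of_lt (key k j hlt)
    · have hwk : w k ≤ w j := h2 k (fun m => le_of_le_of_eq (h1 m) heq.symm)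
      nlinarith
end

section
/- Let n d : ℕ, let v : Fin n → Fin d → ℝ be the apexes of an arrangement of n tropical hyperplanes in ℝ^d, and for x : Fin d → ℝ let type v x : Fin n → Finset (Fin d) be given by (type v x) i = {j | ∀ k, x k - v i k ≤ x j - v i j}. Then for every fixed tuple A : Fin n → Finset (Fin d), the set of points with type A, namely {x : Fin d → ℝ | ∀ i, (type v x) i = A i}, is a convex subset of Fin d → ℝ. In particular every point on a given face of the arrangement has the same type. -/
/-- The set of points with a given fixed type is convex; in particular every point on a
given face of the arrangement has the same type. -/
theorem type_fiber_convex (n d : ℕ) (v : Fin n → Fin d → ℝ)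
    (A : Fin n → Finset (Fin d)) :
    Convex ℝ {x : Fin d → ℝ | ∀ i : Fin n, tropType v x i = A i} := by
  intro x hx y hy a b ha hb hab
  rcases ha.eq_or_lt with rfl | ha'
  · simpa [show b = 1 by linarith] using hy
  rcases hb.eq_or_lt with rfl | hb'
  · simpa [show a = 1 by linarith] using hx
  intro i
  have hxA : ∀ j, j ∈ A i ↔ ∀ k, x k - v i k ≤ x j - v i j := by
    intro j
    rw [← hx i]
    simp [tropType]
  have hyA : ∀ j, j ∈ A i ↔ ∀ k, y k - v i k ≤ y j - v i j := by
    intro j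
    rw [← hy i]
    simp [tropType]
  ext j
  simp only [tropType, Finset.mem_filter, Finset.mem_univ, true_and, Pi.add_apply,
    Pi.smul_apply, smul_eq_mul]
  constructor
  · intro hz
    have : Nonempty (Fin d) := ⟨j⟩
    obtain ⟨j0, -, hj0⟩ := Finset.exists_max_image Finset.univ
      (fun k => x k - v i k) ⟨j, Finset.mem_univ j⟩
    have hj0A : j0 ∈ A i := (hxA j0).2 (fun k => hj0 k (Finset.mem_univ k))
    have hx0 : x j - v i j ≤ x j0 - v i j0 := (hxA j0).1 hj0A j
    have hy0 : y j - v i j ≤ y j0 - v i j0 := (hyA j0).1 hj0A j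
    have hz0 := hz j0
    have hb1 : b = 1 - a := by linarith
    subst hb1
    have hxj : x j0 - v i j0 ≤ x j - v i j := by
      by_contra h
      push_neg at h
      nlinarith [mul_lt_mul_of_pos_left h ha', mul_le_mul_of_nonneg_left hy0 hb]
    rw [hxA]
    intro k
    exact le_trans (hj0 k (Finset.mem_univ k)) hxj
  · intro hj k
    have h1 := (hxA j).1 hj k
    have h2 := (hyA j).1 hj k
    have hb1 : b = 1 - a := by linarith
    subst hb1
    nlinarith [mul_le_mul_of_nonneg_left h1 ha, mul_le_mul_of_nonneg_left h2 hb]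
end
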